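/- Define D(x) = (1/π) ∫₀^∞ cos(tx) · t² · log t · exp(−t²) dt, the derivative at θ = 0 of the symmetric stable density f(x;θ) = (1/π) ∫₀^∞ cos(tx) exp(−t^{2−θ}) dt, whose value at θ = 0 is the N(0,2) density f(x;0) = (1/(2√π)) exp(−x²/4). Then: (i) ∫_{-∞}^∞ |D(x)| dx < ∞ and ∫_{-∞}^∞ D(x) dx = 0, so that the score ℓ(x) = D(x)/f(x;0) has expectation 0 under N(0,2); but (ii) ∫_{-∞}^∞ D(x)² / f(x;0) dx = ∞, i.e. the score has infinite second moment under N(0,2) (the Fisher information for α diverges as α ↑ 2). -/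

import Mathlib

open MeasureTheory
open scoped ENNReal

/-- `D(x) = (1/π) ∫₀^∞ cos(tx) t² log t exp(-t²) dt`, the θ-derivative at `θ = 0` of the
symmetric stable density `f(x;θ) = (1/π) ∫₀^∞ cos(tx) exp(-t^{2-θ}) dt`. -/
noncomputable def symStableDeriv (x : ℝ) : ℝ :=
  (1 / Real.pi) * ∫ t in Set.Ioi (0 : ℝ), Real.cos (t * x) * t ^ 2 * Real.log t *
    Real.exp (-(t ^ 2))

/-- The `N(0,2)` density, the value of the symmetric stable density at `θ = 0`. -/
noncomputable def normal02Pdf (x : ℝ) : ℝ :=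
  (1 / (2 * Real.sqrt Real.pi)) * Real.exp (-x ^ 2 / 4)

open Real Set Filter Topology
open scoped FourierTransform

/-!
Let `g t = t² log |t| e^{-t²}` be the `θ`-derivative of the characteristic function, so that
`D(x) = (1/π) ∫₀^∞ cos (t x) g t dt` is, up to the `2π` in the normalisation of `𝓕`, the
Fourier transform of `g`. Integrating by parts twice on `(0, ∞)` shows that `x² D(x)` is
bounded, so `D` is integrable and Fourier inversion gives `𝓕 (𝓕 g) = g`; at the origin this
reads `∫ D = g 0 = 0`. If `∫ D² / f` were finite, then `2 x² |D| ≤ D² / f + x⁴ f` would make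
`x² D` integrable, and `g = 𝓕 (𝓕 g)` would be `C²`. It is not: `g' t / t ≈ 2 log t → -∞` as
`t → 0⁺`.
-/

lemma abs_log_le_rpow_add_rpow_neg {t ε : ℝ} (ht : 0 < t) (hε : 0 < ε) :
    |log t| ≤ (t ^ ε + t ^ (-ε)) / ε := by
  have hpos : log t ≤ t ^ ε / ε := log_le_rpow_div ht.le hε
  have hneg : log t⁻¹ ≤ t⁻¹ ^ ε / ε := log_le_rpow_div (inv_nonneg.2 ht.le) hε
  rw [log_inv, inv_rpow ht.le, ← rpow_neg ht.le] at hneg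
  have hε₁ : 0 ≤ t ^ ε / ε := by positivity
  have hε₂ : 0 ≤ t ^ (-ε) / ε := by positivity
  rw [abs_le, add_div]
  constructor <;> linarith

lemma integrableOn_rpow_mul_exp_neg_sq {s : ℝ} (hs : -1 < s) :
    IntegrableOn (fun t : ℝ => t ^ s * exp (-t ^ 2)) (Ioi 0) := by
  simpa using integrableOn_rpow_mul_exp_neg_mul_sq one_pos hs

lemma integrableOn_rpow_mul_log_mul_exp_neg_sq {s : ℝ} (hs : -1 < s) :
    IntegrableOn (fun t : ℝ => t ^ s * log t * exp (-t ^ 2)) (Ioi 0) := by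
  set ε := (s + 1) / 2 with hε_def
  have hε : 0 < ε := by linarith
  have hdom : IntegrableOn
      (fun t : ℝ => ε⁻¹ * (t ^ (s + ε) * exp (-t ^ 2) + t ^ (s - ε) * exp (-t ^ 2)))
      (Ioi 0) :=
    ((integrableOn_rpow_mul_exp_neg_sq (by linarith)).add
      (integrableOn_rpow_mul_exp_neg_sq (by linarith))).const_mul _
  refine hdom.mono' (by fun_prop) ?_
  filter_upwards [ae_restrict_mem measurableSet_Ioi] with t (ht : 0 < t)
  have hlog := abs_log_le_rpow_add_rpow_neg ht hε
  calc ‖t ^ s * log t * exp (-t ^ 2)‖ = t ^ s * |log t| * exp (-t ^ 2) := by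
        rw [norm_mul, norm_mul, norm_of_nonneg (rpow_nonneg ht.le s),
          norm_of_nonneg (exp_pos _).le, Real.norm_eq_abs]
    _ ≤ t ^ s * ((t ^ ε + t ^ (-ε)) / ε) * exp (-t ^ 2) := by gcongr
    _ = ε⁻¹ * (t ^ (s + ε) * exp (-t ^ 2) + t ^ (s - ε) * exp (-t ^ 2)) := by
        rw [rpow_add ht, rpow_sub ht, rpow_neg ht.le]
        field_simp

lemma integrableOn_pow_mul_exp_neg_sq (n : ℕ) :
    IntegrableOn (fun t : ℝ => t ^ n * exp (-t ^ 2)) (Ioi 0) := by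
  simpa using integrableOn_rpow_mul_exp_neg_sq (s := n) (by linarith [n.cast_nonneg (α := ℝ)])

lemma integrableOn_pow_mul_log_mul_exp_neg_sq (n : ℕ) :
    IntegrableOn (fun t : ℝ => t ^ n * log t * exp (-t ^ 2)) (Ioi 0) := by
  simpa using integrableOn_rpow_mul_log_mul_exp_neg_sq (s := n)
    (by linarith [n.cast_nonneg (α := ℝ)])

section Even

variable {E : Type*} [NormedAddCommGroup E] {f : ℝ → E}

lemma integrable_of_integrableOn_Ioi_of_even (hf : IntegrableOn f (Ioi 0))
    (heven : ∀ t, f (-t) = f t) : Integrable f := by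
  have hIio : IntegrableOn f (Iio 0) := by
    rw [← (Measure.measurePreserving_neg (volume : Measure ℝ)).integrableOn_comp_preimage
      (Homeomorph.neg ℝ).measurableEmbedding]
    simpa [Function.comp_def, heven] using hf
  rw [← integrableOn_univ, ← Iio_union_Ici, integrableOn_union,
    integrableOn_Ici_iff_integrableOn_Ioi (hb := enorm_ne_top)]
  exact ⟨hIio, hf⟩

lemma integral_eq_setIntegral_Ioi_add_comp_neg [NormedSpace ℝ E] (hf : Integrable f) :
    ∫ t, f t = ∫ t in Ioi 0, (f t + f (-t)) := by
  rw [integral_add hf.integrableOn hf.comp_neg.integrableOn, integral_comp_neg_Ioi, neg_zero,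
    ← intervalIntegral.integral_Iic_add_Ioi hf.integrableOn hf.integrableOn, add_comm]

end Even

noncomputable def cosTransform (h : ℝ → ℝ) (x : ℝ) : ℝ := ∫ t in Ioi 0, cos (t * x) * h t

section CosTransform

variable {h : ℝ → ℝ}

lemma integrableOn_cos_mul (hh : IntegrableOn h (Ioi 0)) (x : ℝ) :
    IntegrableOn (fun t => cos (t * x) * h t) (Ioi 0) :=
  hh.bdd_mul (by fun_prop) (ae_of_all _ fun t => by simpa using abs_cos_le_one (t * x))

lemma abs_cosTransform_le (hh : IntegrableOn h (Ioi 0)) (x : ℝ) :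
    |cosTransform h x| ≤ ∫ t in Ioi 0, |h t| := by
  rw [cosTransform, ← Real.norm_eq_abs]
  refine norm_integral_le_of_norm_le hh.abs (ae_of_all _ fun t => ?_)
  simpa [abs_mul] using mul_le_of_le_one_left (abs_nonneg (h t)) (abs_cos_le_one (t * x))

lemma continuous_cosTransform (hh : IntegrableOn h (Ioi 0)) : Continuous (cosTransform h) :=
  continuous_of_dominated (fun x => (integrableOn_cos_mul hh x).aestronglyMeasurable)
    (fun x => ae_of_all _ fun t => by
      simpa [abs_mul] using mul_le_of_le_one_left (abs_nonneg (h t)) (abs_cos_le_one (t * x)))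
    hh.norm (ae_of_all _ fun t => by fun_prop)

lemma fourier_ofReal_of_even (hh : Integrable h) (heven : ∀ t, h (-t) = h t) (w : ℝ) :
    𝓕 (fun t => (h t : ℂ)) w = ((2 * cosTransform h (2 * π * w) : ℝ) : ℂ) := by
  have hint :
      Integrable fun t : ℝ => Complex.exp (↑(-2 * π * t * w) * Complex.I) * ↑(h t) :=
    hh.ofReal.bdd_mul (c := 1) (by fun_prop)
      (ae_of_all _ fun t => (Complex.norm_exp_ofReal_mul_I _).le)
  simp_rw [Real.fourier_real_eq_integral_exp_smul, smul_eq_mul]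
  rw [integral_eq_setIntegral_Ioi_add_comp_neg hint]
  have hpair : ∀ t : ℝ, Complex.exp (↑(-2 * π * t * w) * Complex.I) * ↑(h t)
      + Complex.exp (↑(-2 * π * -t * w) * Complex.I) * ↑(h (-t))
      = ((2 * (cos (t * (2 * π * w)) * h t) : ℝ) : ℂ) := by
    intro t
    rw [heven]
    push_cast
    rw [Complex.cos]
    ring_nf
  simp only [hpair]
  rw [integral_complex_ofReal, integral_const_mul, cosTransform]

end CosTransform

lemma MeasureTheory.Integrable.fourier_fourier_apply {V E : Type*} [NormedAddCommGroup V]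
    [InnerProductSpace ℝ V] [MeasurableSpace V] [BorelSpace V] [FiniteDimensional ℝ V]
    [NormedAddCommGroup E] [NormedSpace ℂ E] [CompleteSpace E] {f : V → E}
    (hf : Integrable f) (h'f : Integrable (𝓕 f)) {w : V} (hw : ContinuousAt f (-w)) :
    𝓕 (𝓕 f) w = f (-w) := by
  rw [← hf.fourierInv_fourier_eq h'f hw, fourierInv_eq_fourier_neg, neg_neg]

lemma integrable_of_abs_le_of_abs_sq_mul_le {f : ℝ → ℝ} (hf : AEStronglyMeasurable f)
    {A B : ℝ} (hA : ∀ x, |f x| ≤ A) (hB : ∀ x, |x ^ 2 * f x| ≤ B) : Integrable f := by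
  refine (integrable_inv_one_add_sq.const_mul (A + B)).mono' hf (ae_of_all _ fun x => ?_)
  have hx : 0 < 1 + x ^ 2 := by positivity
  rw [Real.norm_eq_abs, ← div_eq_mul_inv, le_div_iff₀ hx]
  calc |f x| * (1 + x ^ 2) = |f x| + |x ^ 2 * f x| := by
        rw [abs_mul, abs_of_nonneg (sq_nonneg x)]; ring
    _ ≤ A + B := add_le_add (hA x) (hB x)

lemma integrable_mul_of_integrable_sq_div {α : Type*} [MeasurableSpace α] {μ : Measure α}
    {u v w : α → ℝ} (hw : ∀ x, 0 < w x) (hu : Integrable (fun x => u x ^ 2 / w x) μ)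
    (hv : Integrable (fun x => v x ^ 2 * w x) μ)
    (huv : AEStronglyMeasurable (fun x => u x * v x) μ) :
    Integrable (fun x => u x * v x) μ := by
  refine ((hu.add hv).div_const 2).mono' huv (ae_of_all _ fun x => ?_)
  have hwx := hw x
  rw [Real.norm_eq_abs, abs_mul, le_div_iff₀ two_pos, Pi.add_apply, div_add' _ _ _ hwx.ne',
    le_div_iff₀ hwx]
  have hsq := sq_nonneg (|u x| - |v x| * w x)
  rw [sub_sq, mul_pow, sq_abs, sq_abs] at hsq
  linarith

lemma integrable_norm_pow_mul_norm_of_integrable_sq_mul {E : Type*} [NormedAddCommGroup E]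
    {F : ℝ → E} (h0 : Integrable F) (h2 : Integrable fun x => x ^ 2 * ‖F x‖) {n : ℕ}
    (hn : n ≤ 2) : Integrable fun x => ‖x‖ ^ n * ‖F x‖ := by
  interval_cases n
  · simpa using h0.norm
  · refine (h0.norm.add h2).mono' (by fun_prop) (ae_of_all _ fun x => ?_)
    have : |x| ≤ 1 + x ^ 2 := by nlinarith [sq_abs x, abs_nonneg x]
    simp only [Real.norm_eq_abs, Pi.add_apply, pow_one, abs_mul, abs_abs, abs_norm]
    nlinarith [norm_nonneg (F x)]
  · simpa using h2

/-- `∂/∂θ exp (-|t| ^ (2 - θ))` at `θ = 0`; no absolute value is needed since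
`Real.log t = log |t|`. -/
noncomputable def charFunDeriv (t : ℝ) : ℝ := t ^ 2 * log t * exp (-t ^ 2)

noncomputable def charFunDeriv' (t : ℝ) : ℝ :=
  (2 * t * log t + t - 2 * t ^ 3 * log t) * exp (-t ^ 2)

noncomputable def charFunDeriv'' (t : ℝ) : ℝ :=
  (2 * log t + 3 - 10 * t ^ 2 * log t - 4 * t ^ 2 + 4 * t ^ 4 * log t) * exp (-t ^ 2)

lemma charFunDeriv_neg (t : ℝ) : charFunDeriv (-t) = charFunDeriv t := by
  simp [charFunDeriv, log_neg_eq_log]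

lemma charFunDeriv_zero : charFunDeriv 0 = 0 := by simp [charFunDeriv]

lemma charFunDeriv'_zero : charFunDeriv' 0 = 0 := by simp [charFunDeriv']

lemma continuous_charFunDeriv : Continuous charFunDeriv := by
  have h : charFunDeriv = fun t => t * (t * log t) * exp (-t ^ 2) := by
    ext t; simp only [charFunDeriv]; ring
  rw [h]
  exact (continuous_id.mul continuous_mul_log).mul (by fun_prop)

lemma continuous_charFunDeriv' : Continuous charFunDeriv' := by
  have h : charFunDeriv' = fun t => (2 * (t * log t) + t - 2 * t ^ 2 * (t * log t)) *
      exp (-t ^ 2) := by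
    ext t; simp only [charFunDeriv']; ring
  rw [h]
  have := continuous_mul_log
  fun_prop

lemma hasDerivAt_exp_neg_sq (t : ℝ) :
    HasDerivAt (fun t => exp (-t ^ 2)) (-2 * t * exp (-t ^ 2)) t := by
  refine (hasDerivAt_pow 2 t).fun_neg.exp.congr_deriv ?_
  push_cast
  ring

lemma hasDerivAt_charFunDeriv (t : ℝ) : HasDerivAt charFunDeriv (charFunDeriv' t) t := by
  refine hasDerivAt_of_hasDerivAt_of_ne' (x := 0) (fun t ht => ?_)
    continuous_charFunDeriv.continuousAt continuous_charFunDeriv'.continuousAt t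
  refine (((hasDerivAt_pow 2 t).fun_mul (hasDerivAt_log ht)).fun_mul
    (hasDerivAt_exp_neg_sq t)).congr_deriv ?_
  simp only [charFunDeriv']
  field_simp
  ring

lemma hasDerivAt_charFunDeriv' {t : ℝ} (ht : t ≠ 0) :
    HasDerivAt charFunDeriv' (charFunDeriv'' t) t := by
  have hlog := hasDerivAt_log ht
  have hpoly : HasDerivAt (fun t => 2 * t * log t + t - 2 * t ^ 3 * log t)
      (2 * log t + 3 - 6 * t ^ 2 * log t - 2 * t ^ 2) t := by
    refine (((((hasDerivAt_id' t).const_mul 2).fun_mul hlog).fun_add (hasDerivAt_id' t)).fun_sub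
      (((hasDerivAt_pow 3 t).const_mul 2).fun_mul hlog)).congr_deriv ?_
    field_simp
    ring
  refine (hpoly.fun_mul (hasDerivAt_exp_neg_sq t)).congr_deriv ?_
  simp only [charFunDeriv'']
  ring

lemma integrableOn_charFunDeriv : IntegrableOn charFunDeriv (Ioi 0) :=
  integrableOn_pow_mul_log_mul_exp_neg_sq 2

lemma integrableOn_charFunDeriv' : IntegrableOn charFunDeriv' (Ioi 0) := by
  have h : charFunDeriv' = fun t => 2 * (t ^ 1 * log t * exp (-t ^ 2)) + t ^ 1 * exp (-t ^ 2)
      - 2 * (t ^ 3 * log t * exp (-t ^ 2)) := by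
    ext t; simp only [charFunDeriv']; ring
  rw [h]
  exact (((integrableOn_pow_mul_log_mul_exp_neg_sq 1).const_mul 2).add
    (integrableOn_pow_mul_exp_neg_sq 1)).sub
    ((integrableOn_pow_mul_log_mul_exp_neg_sq 3).const_mul 2)

lemma integrableOn_charFunDeriv'' : IntegrableOn charFunDeriv'' (Ioi 0) := by
  have h : charFunDeriv'' = fun t => 2 * (t ^ 0 * log t * exp (-t ^ 2))
      + 3 * (t ^ 0 * exp (-t ^ 2)) - 10 * (t ^ 2 * log t * exp (-t ^ 2))
      - 4 * (t ^ 2 * exp (-t ^ 2)) + 4 * (t ^ 4 * log t * exp (-t ^ 2)) := by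
    ext t; simp only [charFunDeriv'']; ring
  rw [h]
  exact (((((integrableOn_pow_mul_log_mul_exp_neg_sq 0).const_mul 2).add
    ((integrableOn_pow_mul_exp_neg_sq 0).const_mul 3)).sub
    ((integrableOn_pow_mul_log_mul_exp_neg_sq 2).const_mul 10)).sub
    ((integrableOn_pow_mul_exp_neg_sq 2).const_mul 4)).add
    ((integrableOn_pow_mul_log_mul_exp_neg_sq 4).const_mul 4)

lemma integrable_charFunDeriv : Integrable charFunDeriv :=
  integrable_of_integrableOn_Ioi_of_even integrableOn_charFunDeriv charFunDeriv_neg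

lemma tendsto_slope_charFunDeriv'_atBot : Tendsto (slope charFunDeriv' 0) (𝓝[>] 0) atBot := by
  have hcont : ∀ φ : ℝ → ℝ, Continuous φ → Tendsto φ (𝓝[>] 0) (𝓝 (φ 0)) :=
    fun φ hφ => hφ.continuousAt.tendsto.mono_left nhdsWithin_le_nhds
  have hrest : Tendsto (fun t => 1 - 2 * t * (t * log t)) (𝓝[>] 0) (𝓝 1) := by
    convert hcont (fun t => 1 - 2 * t * (t * log t)) (by have := continuous_mul_log; fun_prop)
    simp
  have hexp : Tendsto (fun t : ℝ => exp (-t ^ 2)) (𝓝[>] 0) (𝓝 1) := by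
    convert hcont (fun t : ℝ => exp (-t ^ 2)) (by fun_prop)
    simp
  have hlog : Tendsto (fun t => 2 * log t + (1 - 2 * t * (t * log t))) (𝓝[>] 0) atBot :=
    (tendsto_log_nhdsGT_zero.const_mul_atBot two_pos).atBot_add hrest
  refine (hlog.atBot_mul_pos one_pos hexp).congr' ?_
  filter_upwards [self_mem_nhdsWithin] with t (ht : 0 < t)
  rw [slope_def_field, charFunDeriv'_zero, charFunDeriv', sub_zero, sub_zero, eq_div_iff ht.ne']
  ring

lemma not_differentiableAt_charFunDeriv'_zero : ¬ DifferentiableAt ℝ charFunDeriv' 0 :=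
  fun h => not_tendsto_atBot_of_tendsto_nhds
    ((hasDerivAt_iff_tendsto_slope.1 h.hasDerivAt).mono_left (nhdsGT_le_nhdsNE 0))
    tendsto_slope_charFunDeriv'_atBot

lemma not_contDiff_two_charFunDeriv : ¬ ContDiff ℝ 2 charFunDeriv := by
  intro h
  have hderiv : deriv charFunDeriv = charFunDeriv' :=
    funext fun t => (hasDerivAt_charFunDeriv t).deriv
  have h1 : ContDiff ℝ 1 (deriv charFunDeriv) := (contDiff_succ_iff_deriv (n := 1)).1 h |>.2.2
  rw [hderiv] at h1
  exact not_differentiableAt_charFunDeriv'_zero (h1.differentiable one_ne_zero 0)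

lemma symStableDeriv_eq : symStableDeriv = fun x => π⁻¹ * cosTransform charFunDeriv x := by
  ext x
  rw [symStableDeriv, cosTransform, one_div]
  congr 1
  refine setIntegral_congr_fun measurableSet_Ioi fun t _ => ?_
  simp only [charFunDeriv]
  ring

lemma sq_mul_cosTransform_charFunDeriv (x : ℝ) :
    x ^ 2 * cosTransform charFunDeriv x = -cosTransform charFunDeriv'' x := by
  set F : ℝ → ℝ := fun t => cos (t * x) * charFunDeriv' t + x * (sin (t * x) * charFunDeriv t)
  set F' : ℝ → ℝ := fun t =>
    cos (t * x) * charFunDeriv'' t + x ^ 2 * (cos (t * x) * charFunDeriv t)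
  have hderiv : ∀ t ∈ Ioi (0 : ℝ), HasDerivAt F (F' t) t := fun t (ht : 0 < t) => by
    have hmul : HasDerivAt (fun t => t * x) x t := hasDerivAt_mul_const x
    refine ((hmul.cos.fun_mul (hasDerivAt_charFunDeriv' ht.ne')).fun_add
      ((hmul.sin.fun_mul (hasDerivAt_charFunDeriv t)).const_mul x)).congr_deriv ?_
    ring
  have hF'int : IntegrableOn F' (Ioi 0) :=
    (integrableOn_cos_mul integrableOn_charFunDeriv'' x).add
      ((integrableOn_cos_mul integrableOn_charFunDeriv x).const_mul _)
  have hFint : IntegrableOn F (Ioi 0) :=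
    (integrableOn_cos_mul integrableOn_charFunDeriv' x).add
      ((integrableOn_charFunDeriv.bdd_mul (c := 1) (by fun_prop)
        (ae_of_all _ fun t => by simpa using abs_sin_le_one (t * x))).const_mul x)
  have hcont : ContinuousWithinAt F (Ici 0) 0 := by
    have := continuous_charFunDeriv
    have := continuous_charFunDeriv'
    exact Continuous.continuousWithinAt (by fun_prop)
  -- `F` packages both integrations by parts; it vanishes at `0` and at `∞`.
  have hFTC := integral_Ioi_of_hasDerivAt_of_tendsto hcont hderiv hF'int
    (tendsto_zero_of_hasDerivAt_of_integrableOn_Ioi hderiv hF'int hFint)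
  rw [integral_add (integrableOn_cos_mul integrableOn_charFunDeriv'' x)
      ((integrableOn_cos_mul integrableOn_charFunDeriv x).const_mul _), integral_const_mul]
    at hFTC
  simp only [F, zero_mul, cos_zero, sin_zero, charFunDeriv'_zero] at hFTC
  rw [cosTransform, cosTransform]
  linarith

lemma integrable_symStableDeriv : Integrable symStableDeriv := by
  rw [symStableDeriv_eq]
  refine (integrable_of_abs_le_of_abs_sq_mul_le (B := ∫ t in Ioi 0, |charFunDeriv'' t|)
    (continuous_cosTransform integrableOn_charFunDeriv).aestronglyMeasurable
    (abs_cosTransform_le integrableOn_charFunDeriv) fun x => ?_).const_mul _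
  rw [sq_mul_cosTransform_charFunDeriv, abs_neg]
  exact abs_cosTransform_le integrableOn_charFunDeriv'' x

lemma continuous_symStableDeriv : Continuous symStableDeriv := by
  rw [symStableDeriv_eq]
  exact continuous_const.mul (continuous_cosTransform integrableOn_charFunDeriv)

lemma fourier_charFunDeriv (w : ℝ) :
    𝓕 (fun t => (charFunDeriv t : ℂ)) w = ((2 * π * symStableDeriv (2 * π * w) : ℝ) : ℂ) := by
  rw [fourier_ofReal_of_even integrable_charFunDeriv charFunDeriv_neg, symStableDeriv_eq]
  field_simp [pi_ne_zero]

lemma integrable_fourier_charFunDeriv : Integrable (𝓕 fun t => (charFunDeriv t : ℂ)) := by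
  rw [funext fourier_charFunDeriv]
  exact ((integrable_symStableDeriv.comp_mul_left' two_pi_pos.ne').const_mul _).ofReal

lemma fourier_fourier_charFunDeriv :
    𝓕 (𝓕 fun t => (charFunDeriv t : ℂ)) = fun t => (charFunDeriv t : ℂ) := by
  ext w
  rw [integrable_charFunDeriv.ofReal.fourier_fourier_apply integrable_fourier_charFunDeriv
    (by have := continuous_charFunDeriv; fun_prop), charFunDeriv_neg]

lemma integral_symStableDeriv : ∫ x, symStableDeriv x = 0 := by
  -- `𝓕 (𝓕 g) 0 = ∫ 𝓕 g`, which is `∫ D` after the substitution `x = 2πw`.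
  have h := congrFun fourier_fourier_charFunDeriv 0
  rw [funext fourier_charFunDeriv] at h
  simp only [Real.fourier_real_eq_integral_exp_smul, mul_zero, Complex.ofReal_zero, zero_mul,
    Complex.exp_zero, one_smul, charFunDeriv_zero] at h
  rw [integral_complex_ofReal, integral_const_mul, Measure.integral_comp_mul_left,
    abs_of_pos (inv_pos.2 two_pi_pos), smul_eq_mul] at h
  field_simp [pi_ne_zero] at h
  exact_mod_cast h

lemma integrable_sq_mul_norm_fourier_charFunDeriv
    (h : Integrable fun x => x ^ 2 * symStableDeriv x) :
    Integrable fun w : ℝ => w ^ 2 * ‖𝓕 (fun t => (charFunDeriv t : ℂ)) w‖ := by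
  refine ((h.norm.comp_mul_left' two_pi_pos.ne').const_mul (2 * π)⁻¹).congr
    (ae_of_all _ fun w => ?_)
  simp only [fourier_charFunDeriv, Complex.norm_real, Real.norm_eq_abs, abs_mul, abs_pow,
    abs_of_pos two_pi_pos]
  field_simp
  rw [sq_abs]

lemma not_integrable_sq_mul_symStableDeriv :
    ¬ Integrable fun x => x ^ 2 * symStableDeriv x := by
  intro h
  have hC2 : ContDiff ℝ 2 fun t => (charFunDeriv t : ℂ) := by
    rw [← fourier_fourier_charFunDeriv]
    refine Real.contDiff_fourier fun n hn => ?_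
    exact integrable_norm_pow_mul_norm_of_integrable_sq_mul integrable_fourier_charFunDeriv
      (integrable_sq_mul_norm_fourier_charFunDeriv h) (by exact_mod_cast hn)
  refine not_contDiff_two_charFunDeriv ?_
  convert Complex.reCLM.contDiff.comp hC2 using 1
  ext t
  simp

lemma normal02Pdf_pos (x : ℝ) : 0 < normal02Pdf x := by
  unfold normal02Pdf
  positivity

lemma continuous_normal02Pdf : Continuous normal02Pdf := by
  unfold normal02Pdf
  fun_prop

lemma integrable_pow_four_mul_normal02Pdf : Integrable fun x => x ^ 4 * normal02Pdf x := by
  have h := (integrable_rpow_mul_exp_neg_mul_sq (b := 1 / 4) (by norm_num) (s := 4)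
    (by norm_num)).const_mul (1 / (2 * sqrt π))
  refine h.congr (ae_of_all _ fun x => ?_)
  simp only [normal02Pdf]
  norm_cast
  ring_nf

/-- non-regularity of the stable family at the normal boundary.
(i) `D` is absolutely integrable with `∫ D = 0`, so the score `D/f(·;0)` has mean `0`
under `N(0,2)`; but (ii) `∫ D²/f(·;0) = ∞`: the score has infinite second moment
(the Fisher information for `α` diverges as `α ↑ 2`). -/
theorem stable_score_mean_zero_infinite_information :
    Integrable symStableDeriv
    ∧ (∫ x : ℝ, symStableDeriv x) = 0
    ∧ (∫⁻ x : ℝ, ENNReal.ofReal (symStableDeriv x ^ 2 / normal02Pdf x)) = ⊤ := by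
  refine ⟨integrable_symStableDeriv, integral_symStableDeriv, ?_⟩
  by_contra hfin
  have hscore : Integrable fun x => symStableDeriv x ^ 2 / normal02Pdf x := by
    refine ⟨((continuous_symStableDeriv.pow 2).div continuous_normal02Pdf
      fun x => (normal02Pdf_pos x).ne').aestronglyMeasurable, ?_⟩
    rw [hasFiniteIntegral_iff_ofReal
      (ae_of_all _ fun x => div_nonneg (sq_nonneg _) (normal02Pdf_pos x).le)]
    exact lt_top_iff_ne_top.2 hfin
  have hmoment : Integrable fun x : ℝ => (x ^ 2) ^ 2 * normal02Pdf x := by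
    simpa only [← pow_mul] using integrable_pow_four_mul_normal02Pdf
  refine not_integrable_sq_mul_symStableDeriv ?_
  simpa only [mul_comm] using integrable_mul_of_integrable_sq_div normal02Pdf_pos hscore hmoment
    (by have := continuous_symStableDeriv; fun_prop)
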